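/- arXiv:1611.04137 — 2 statements merged into one kernel-verified Lean document; each statement's English description precedes it below -/
import Mathlib

section
/- Let $R$ be a normal domain and $M$ a finitely generated reflexive $R$-module. Then $\operatorname{End}_R(M)$ is a symmetric $R$-algebra, i.e., $\operatorname{Hom}_R(\operatorname{End}_R(M), R) \cong \operatorname{End}_R(M)$ as $\operatorname{End}_R(M)$-bimodules. -/
/-!
Let `K` be the fraction field of `R`. Every endomorphism `u` of `M` satisfies a monic polynomial
over `R` (Cayley–Hamilton), so the eigenvalues of `K ⊗ u`, hence its trace, are integral over `R`;
as `R` is normal, this trace lies in `R`. This gives an `R`-linear trace `tr` on `End_R(M)` with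
`tr (f.smulRight m) = f m`, and `u ↦ tr (u ·)` is the required isomorphism. It is injective because
`M` embeds in its double dual. For surjectivity, given `φ`, reflexivity produces `u` with
`f (u m) = φ (f.smulRight m)`; then `tr (u ·)` and `φ` agree on rank-one maps, and these span
`End_R(M)` up to a nonzero scalar because `M` becomes free over `K`.
-/

open Polynomial Module TensorProduct

namespace Module.End

variable {K V : Type*} [Field K] [AddCommGroup V] [Module K V]

theorem eval_eq_zero_of_hasEigenvalue {f : End K V} {μ : K} (hμ : f.HasEigenvalue μ) {p : K[X]}
    (hp : aeval f p = 0) : p.eval μ = 0 := by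
  obtain ⟨x, hx⟩ := hμ.exists_hasEigenvector
  have := aeval_apply_of_hasEigenvector (p := p) hx
  rw [hp, LinearMap.zero_apply] at this
  exact (smul_eq_zero.mp this.symm).resolve_right hx.2

theorem isIntegral_trace_of_aeval_eq_zero {R : Type*} [CommRing R] [Algebra R K]
    [FiniteDimensional K V] (f : End K V) {p : R[X]} (hp : p.Monic)
    (hf : aeval f (p.map (algebraMap R K)) = 0) : IsIntegral R (LinearMap.trace K V f) := by
  let L := AlgebraicClosure K
  rw [← isIntegral_algebraMap_iff (algebraMap K L).injective, ← LinearMap.trace_baseChange,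
    trace_eq_sum_roots_charpoly_of_splits (IsAlgClosed.splits _)]
  have hfL : aeval (f.baseChange L) (p.map (algebraMap R L)) = 0 := by
    rw [IsScalarTower.algebraMap_eq R K L, ← Polynomial.map_map, aeval_map_algebraMap,
      show f.baseChange L = baseChangeHom K L V f from rfl, aeval_algHom_apply, hf, map_zero]
  refine Subalgebra.multiset_sum_mem (integralClosure R L) fun μ hμ ↦ ⟨p, hp, ?_⟩
  rw [eval₂_eq_eval_map]
  exact eval_eq_zero_of_hasEigenvalue
    ((hasEigenvalue_iff_isRoot_charpoly _ _).2 (isRoot_of_mem_roots hμ)) hfL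

end Module.End

section

variable {R M : Type*} [CommRing R] [AddCommGroup M] [Module R M]

theorem LinearMap.comp_smulRight {N : Type*} [AddCommGroup N] [Module R N] (u : M →ₗ[R] N)
    (f : Dual R M) (m : M) : u ∘ₗ f.smulRight m = f.smulRight (u m) := by
  ext; simp

theorem LinearMap.smulRight_comp {N : Type*} [AddCommGroup N] [Module R N] (f : Dual R M) (m : M)
    (v : N →ₗ[R] M) : f.smulRight m ∘ₗ v = (f ∘ₗ v).smulRight m :=
  rfl

theorem LinearMap.baseChange_smulRight (A : Type*) [CommRing A] [Algebra R A] (f : Dual R M)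
    (m : M) : (f.smulRight m).baseChange A = (f.baseChange A).smulRight (1 ⊗ₜ m) := by
  ext; simp [smul_tmul']

theorem TensorProduct.mk_one_injective_of_isTorsionFree [IsDomain R] [IsTorsionFree R M] :
    Function.Injective (TensorProduct.mk R (FractionRing R) M 1) := by
  have := (isLocalizedModule_iff_isBaseChange (nonZeroDivisors R) (FractionRing R)
    (TensorProduct.mk R (FractionRing R) M 1)).mpr (TensorProduct.isBaseChange R M _)
  exact (IsLocalizedModule.injective_iff_isRegular (nonZeroDivisors R) _).mpr fun c ↦
    (isRegular_iff_ne_zero.mpr (nonZeroDivisors.coe_ne_zero c)).isSMulRegular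

namespace Module.End

theorem isIntegral_trace_baseChange [Module.Finite R M] (K : Type*) [Field K] [Algebra R K]
    (u : End R M) : IsIntegral R (LinearMap.trace K (K ⊗[R] M) (u.baseChange K)) := by
  obtain ⟨p, hp, hu⟩ := Algebra.IsIntegral.isIntegral (R := R) u
  refine isIntegral_trace_of_aeval_eq_zero _ hp ?_
  rw [aeval_map_algebraMap, show u.baseChange K = baseChangeHom R K M u from rfl,
    aeval_algHom_apply, show aeval u p = 0 from hu, map_zero]

section Domain

variable [IsDomain R] [Module.Finite R M]

/-- Choose `m_j ∈ M` whose images form a basis of `K ⊗ M`; clearing the denominators of the dual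
coordinates gives `f_j ∈ Dual R M` with `s • x = ∑ f_j x • m_j`. -/
theorem exists_smul_id_mem_span_smulRight [IsTorsionFree R M] :
    ∃ s : R, s ≠ 0 ∧ s • LinearMap.id ∈
      Submodule.span R (Set.range fun p : Dual R M × M ↦ p.1.smulRight p.2) := by
  let K := FractionRing R
  let ι := TensorProduct.mk R K M 1
  have hspan : ⊤ ≤ Submodule.span K (Set.range ι) := by
    rw [← Submodule.baseChange_top, Submodule.baseChange_eq_span, Submodule.map_top,
      LinearMap.coe_range]
  let b := Basis.ofSpan hspan
  have : Fintype _ := @Fintype.ofFinite _ (Module.Finite.finite_basis b)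
  have hb : ∀ j, ∃ m, ι m = b j := fun j ↦ Basis.ofSpan_subset hspan ⟨j, rfl⟩
  choose m hm using hb
  let c j : M →ₗ[R] K := (b.coord j).restrictScalars R ∘ₗ ι
  obtain ⟨s, hs, hint⟩ := FractionalIdeal.isFractional_of_fg (S := nonZeroDivisors R)
    (Submodule.fg_iSup _ fun j ↦ Submodule.fg_range (c j))
  let f j : Dual R M := LinearMap.codRestrictOfInjective (s • c j) (Algebra.linearMap R K)
    (IsFractionRing.injective R K) fun x ↦
      hint _ (Submodule.mem_iSup_of_mem j (LinearMap.mem_range_self _ x))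
  have hsum : s • LinearMap.id = ∑ j, (f j).smulRight (m j) := by
    ext x
    apply TensorProduct.mk_one_injective_of_isTorsionFree (R := R)
    have hf j : algebraMap R K (f j x) = s • b.coord j (ι x) := by
      rw [← Algebra.linearMap_apply]
      exact LinearMap.codRestrictOfInjective_comp_apply _ _ _ _ x
    show ι (s • x) = ι ((∑ j, (f j).smulRight (m j)) x)
    calc ι (s • x) = s • ∑ j, b.coord j (ι x) • b j := by
          rw [map_smul]; exact congrArg _ (b.sum_repr (ι x)).symm
      _ = ∑ j, f j x • ι (m j) := by
          simp only [Finset.smul_sum, hm, ← smul_assoc, ← hf, algebraMap_smul]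
      _ = ι ((∑ j, (f j).smulRight (m j)) x) := by simp
  exact ⟨s, nonZeroDivisors.ne_zero hs, hsum ▸ Submodule.sum_mem _ fun j _ ↦
    Submodule.subset_span ⟨(f j, m j), rfl⟩⟩

theorem linearMap_ext_smulRight [IsTorsionFree R M] {N : Type*} [AddCommGroup N] [Module R N]
    [IsTorsionFree R N] {φ ψ : End R M →ₗ[R] N}
    (h : ∀ (f : Dual R M) (m : M), φ (f.smulRight m) = ψ (f.smulRight m)) : φ = ψ := by
  obtain ⟨s, hs, hmem⟩ := exists_smul_id_mem_span_smulRight (R := R) (M := M)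
  ext v
  have hv : s • LinearMap.id ∈ (LinearMap.ker (φ - ψ)).comap (LinearMap.mulRight R v) := by
    refine Submodule.span_le.2 ?_ hmem
    rintro _ ⟨⟨f, m⟩, rfl⟩
    simpa [sub_eq_zero, mul_eq_comp, LinearMap.smulRight_comp] using h (f ∘ₗ v) m
  simpa [sub_eq_zero, smul_sub, smul_right_inj hs, mul_eq_comp] using hv

variable [IsIntegrallyClosed R]

variable (R M) in
noncomputable def integralTrace : End R M →ₗ[R] R :=
  LinearMap.codRestrictOfInjective
    ((LinearMap.trace (FractionRing R) _).restrictScalars R ∘ₗ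
      (baseChangeHom R (FractionRing R) M).toLinearMap)
    (Algebra.linearMap R (FractionRing R)) (IsFractionRing.injective R _)
    fun u ↦ IsIntegrallyClosed.isIntegral_iff.mp (isIntegral_trace_baseChange _ u)

theorem algebraMap_integralTrace (u : End R M) :
    algebraMap R (FractionRing R) (integralTrace R M u) =
      LinearMap.trace (FractionRing R) _ (u.baseChange (FractionRing R)) := by
  rw [← Algebra.linearMap_apply]
  exact LinearMap.codRestrictOfInjective_comp_apply _ _ _ _ u

theorem integralTrace_mul_comm (u v : End R M) :
    integralTrace R M (u * v) = integralTrace R M (v * u) := by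
  apply IsFractionRing.injective R (FractionRing R)
  simp only [algebraMap_integralTrace, LinearMap.baseChange_mul, LinearMap.trace_mul_comm]

theorem integralTrace_smulRight (f : Dual R M) (m : M) :
    integralTrace R M (f.smulRight m) = f m := by
  apply IsFractionRing.injective R (FractionRing R)
  rw [algebraMap_integralTrace, LinearMap.baseChange_smulRight, LinearMap.trace_smulRight,
    Dual.baseChange_apply_tmul, Algebra.smul_def, mul_one]

variable (R M) in
noncomputable def tracePairing : End R M →ₗ[R] End R M →ₗ[R] R :=
  (LinearMap.mul R (End R M)).compr₂ (integralTrace R M)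

theorem tracePairing_apply (u v : End R M) :
    tracePairing R M u v = integralTrace R M (u * v) :=
  rfl

theorem tracePairing_smulRight (u : End R M) (f : Dual R M) (m : M) :
    tracePairing R M u (f.smulRight m) = f (u m) := by
  rw [tracePairing_apply, mul_eq_comp, LinearMap.comp_smulRight, integralTrace_smulRight]

theorem tracePairing_bijective [IsReflexive R M] : Function.Bijective (tracePairing R M) := by
  refine ⟨(injective_iff_map_eq_zero _).2 fun u hu ↦ ?_, fun φ ↦ ?_⟩
  · ext m
    refine (bijective_dual_eval R M).injective (LinearMap.ext fun f ↦ ?_)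
    simpa [tracePairing_smulRight] using LinearMap.congr_fun hu (f.smulRight m)
  · let u : End R M :=
      (evalEquiv R M).symm.toLinearMap ∘ₗ LinearMap.smulRightₗ.flip.compr₂ φ
    refine ⟨u, linearMap_ext_smulRight fun f m ↦ ?_⟩
    simp [tracePairing_smulRight, u]

end Domain

end Module.End

end

theorem endomorphism_ring_is_symmetric_general (R : Type*) [CommRing R] [IsDomain R]
    [IsIntegrallyClosed R]  -- `R` is a Noetherian normal domain
    (M : Type*) [AddCommGroup M] [Module R M] [Module.Finite R M]
    [Module.IsReflexive R M] :
    ∃ e : Module.End R M ≃ₗ[R] (Module.End R M →ₗ[R] R),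
      ∀ a x b y : Module.End R M, e (a * x * b) y = e x (b * y * a) := by
  refine ⟨.ofBijective _ Module.End.tracePairing_bijective, fun a x b y ↦ ?_⟩
  simp only [LinearEquiv.ofBijective_apply, Module.End.tracePairing_apply]
  rw [show a * x * b * y = a * (x * b * y) by simp only [mul_assoc],
    Module.End.integralTrace_mul_comm]
  simp only [mul_assoc]

theorem endomorphism_ring_is_symmetric (R : Type*) [CommRing R] [IsDomain R]
    [IsNoetherianRing R] [IsIntegrallyClosed R]  -- `R` is a Noetherian normal domain
    (M : Type*) [AddCommGroup M] [Module R M] [Module.Finite R M]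
    [Module.IsReflexive R M] :
    ∃ e : Module.End R M ≃ₗ[R] (Module.End R M →ₗ[R] R),
      ∀ a x b y : Module.End R M, e (a * x * b) y = e x (b * y * a) :=
  endomorphism_ring_is_symmetric_general R M
end

section
/- Let $R$ be a Cohen–Macaulay normal domain with canonical module $\omega_R$, and let $\nu: \operatorname{refl}(R) \to \operatorname{refl}(R)$ be the Nakayama functor $\nu(X) = (\omega_R \otimes_R X)^{**} = \operatorname{Hom}_R(\operatorname{Hom}_R(X,R), \omega_R)$. Then for all finitely generated reflexive $R$-modules $X, Y$ there are natural isomorphisms $\operatorname{Hom}_R(Y, \nu(X)) \cong \operatorname{Hom}_R(\operatorname{Hom}_R(X,Y), \omega_R)$. -/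
/-!
STATEMENT 16: Let `R` be a Cohen–Macaulay normal domain with canonical module `ω`, and let
`ν(X) = Hom_R(Hom_R(X, R), ω)` (`= (ω ⊗ X)**`) be the Nakayama functor on finitely
generated reflexive modules.  Then for all finitely generated reflexive `R`-modules `X, Y`
there are natural isomorphisms `Hom_R(Y, ν(X)) ≅ Hom_R(Hom_R(X, Y), ω)`.
(A canonical module of a normal CM domain is a finitely generated reflexive module of
rank one; these are the hypotheses imposed on `ω`.)
-/

open scoped TensorProduct

/-- The depth of the `T`-module `X` along the ideal `I`: the supremum of lengths of
`X`-regular sequences contained in `I`. -/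
noncomputable def idealDepth (T : Type*) [CommRing T] (I : Ideal T)
    (X : Type*) [AddCommGroup X] [Module T X] : ℕ∞ :=
  sSup {n : ℕ∞ | ∃ rs : List T, n = rs.length ∧ (∀ r ∈ rs, r ∈ I) ∧
    RingTheory.Sequence.IsRegular X rs}

/-- A commutative ring is Cohen–Macaulay if, for every prime `p`, the depth of the local
ring `R_p` equals its Krull dimension. -/
noncomputable def IsCohenMacaulayRing (R : Type*) [CommRing R] : Prop :=
  ∀ (p : Ideal R) [p.IsPrime],
    (idealDepth (Localization.AtPrime p) (IsLocalRing.maximalIdeal (Localization.AtPrime p))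
        (Localization.AtPrime p) : WithBot ℕ∞) = ringKrullDim (Localization.AtPrime p)

/-!
Write `u : X* ⊗ Y → Hom(X, Y)` for the canonical map. Currying identifies `Hom(Y, Hom(X*, ω))`
with `Hom(X* ⊗ Y, ω)`, so it suffices that precomposition with `u` is bijective on `Hom(-, ω)`.
Whenever `c • id_X` factors through a finite free module, `u` is invertible up to the scalar `c`.
Such a `c ≠ 0` exists because `X` is generically free, and for every associated prime `P` of
`R/(c)` there is such a `b ∉ P`: normality makes `R_P` a DVR, over which the torsion-free module
`X_P` is free. Finally, `ω` is reflexive, so `w ∈ ω` is divisible by `c` as soon as, for each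
associated prime `P` of `R/(c)`, some `b • w` with `b ∉ P` is; this is what lets one divide by
`c` to invert precomposition with `u`.
-/

open Module LinearMap

theorem LinearMap.exists_eq_smul_of_forall_exists_eq_smul {R N W : Type*} [CommSemiring R]
    [AddCommMonoid N] [Module R N] [AddCommMonoid W] [Module R W] {c : R}
    (hc : IsSMulRegular W c) (F : N →ₗ[R] W) (h : ∀ n, ∃ w, F n = c • w) :
    ∃ G : N →ₗ[R] W, F = c • G := by
  choose G hG using h
  refine ⟨{ toFun := G, map_add' := fun n₁ n₂ => hc ?_, map_smul' := fun r n => hc ?_ }, ?_⟩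
  · change c • _ = c • _
    rw [smul_add, ← hG, ← hG, ← hG, map_add]
  · change c • _ = c • _
    rw [RingHom.id_apply, smul_comm, ← hG, ← hG, map_smul]
  · ext n
    exact hG n

section AssociatedPrimes

variable {R : Type*} [CommRing R] [IsNoetherianRing R]

theorem eq_zero_of_forall_isAssociatedPrime {M : Type*} [AddCommGroup M] [Module R M] {m : M}
    (h : ∀ P : Ideal R, IsAssociatedPrime P M → ∃ b ∉ P, b • m = 0) : m = 0 := by
  by_contra hm
  obtain ⟨P, hP, hle⟩ := exists_le_isAssociatedPrime_of_isNoetherianRing R m hm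
  obtain ⟨b, hbP, hb⟩ := h P hP
  exact hbP (hle (by rwa [Submodule.mem_colon_singleton, Submodule.mem_bot]))

theorem Module.IsReflexive.exists_eq_smul_of_forall_isAssociatedPrime {W : Type*}
    [AddCommGroup W] [Module R W] [IsReflexive R W] {c : R} (hc : IsRegular c) {w : W}
    (h : ∀ P : Ideal R, IsAssociatedPrime P (R ⧸ Ideal.span {c}) →
      ∃ b ∉ P, ∃ w', b • w = c • w') :
    ∃ w', w = c • w' := by
  have hdvd (φ : Dual R W) : ∃ a, φ w = c • a := by
    have : Ideal.Quotient.mk (Ideal.span {c}) (φ w) = 0 :=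
      eq_zero_of_forall_isAssociatedPrime fun P hP => by
        obtain ⟨b, hbP, w', hw'⟩ := h P hP
        refine ⟨b, hbP, ?_⟩
        rw [Algebra.smul_def, Ideal.Quotient.algebraMap_eq, ← map_mul, ← smul_eq_mul,
          ← map_smul, hw', map_smul, smul_eq_mul, Ideal.Quotient.eq_zero_iff_mem]
        exact Ideal.mul_mem_right _ _ (Ideal.mem_span_singleton_self c)
    obtain ⟨a, ha⟩ := Ideal.mem_span_singleton'.mp (Ideal.Quotient.eq_zero_iff_mem.mp this)
    exact ⟨a, by rw [← ha, smul_eq_mul, mul_comm]⟩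
  obtain ⟨G, hG⟩ := (Dual.eval R W w).exists_eq_smul_of_forall_exists_eq_smul
    hc.isSMulRegular hdvd
  refine ⟨(evalEquiv R W).symm G, (evalEquiv R W).injective ?_⟩
  rw [map_smul, LinearEquiv.apply_symm_apply]
  exact hG

end AssociatedPrimes

def HasScaledInverse {R M N : Type*} [CommSemiring R] [AddCommMonoid M] [Module R M]
    [AddCommMonoid N] [Module R N] (u : M →ₗ[R] N) (c : R) : Prop :=
  ∃ σ : N →ₗ[R] M, σ ∘ₗ u = c • LinearMap.id ∧ u ∘ₗ σ = c • LinearMap.id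

theorem bijective_lcomp_of_hasScaledInverse {R M N W : Type*} [CommRing R] [IsNoetherianRing R]
    [AddCommMonoid M] [Module R M] [AddCommMonoid N] [Module R N] [AddCommGroup W] [Module R W]
    [IsReflexive R W] {u : M →ₗ[R] N} {c : R} (hc : IsRegular c) (hcu : HasScaledInverse u c)
    (hloc : ∀ P : Ideal R, IsAssociatedPrime P (R ⧸ Ideal.span {c}) →
      ∃ b ∉ P, HasScaledInverse u b) :
    Function.Bijective (lcomp R W u) := by
  obtain ⟨σ, hσu, huσ⟩ := hcu
  have hcomp (g : N →ₗ[R] W) : g ∘ₗ u ∘ₗ σ = c • g := by rw [huσ, comp_smul, comp_id]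
  refine ⟨fun g₁ g₂ h => hc.isSMulRegular ?_, fun q => ?_⟩
  · simp only [lcomp_apply'] at h
    change c • g₁ = c • g₂
    rw [← hcomp, ← hcomp, ← comp_assoc, h, comp_assoc]
  · -- The preimage of `q` is `q ∘ σ / c`; it exists since `b • q (σ n) = c • q (σ' n)`.
    have hdiv (n : N) : ∃ w, q (σ n) = c • w := by
      refine IsReflexive.exists_eq_smul_of_forall_isAssociatedPrime hc fun P hP => ?_
      obtain ⟨b, hbP, σ', hσ'u, -⟩ := hloc P hP
      refine ⟨b, hbP, q (σ' n), ?_⟩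
      have hb : b • σ n = σ' (u (σ n)) := by rw [← comp_apply, hσ'u]; rfl
      have hn : u (σ n) = c • n := by rw [← comp_apply, huσ]; rfl
      rw [← map_smul, hb, hn, map_smul, map_smul]
    obtain ⟨G, hG⟩ := (q ∘ₗ σ).exists_eq_smul_of_forall_exists_eq_smul hc.isSMulRegular hdiv
    refine ⟨G, hc.isSMulRegular ?_⟩
    change c • (G ∘ₗ u) = c • q
    rw [← smul_comp, ← hG, comp_assoc, hσu, comp_smul, comp_id]

section FactorsThroughFree

variable (R X : Type*) [CommRing R] [AddCommGroup X] [Module R X]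

def SmulIdFactorsThroughFree (c : R) : Prop :=
  ∃ (n : ℕ) (φ : X →ₗ[R] Fin n → R) (ψ : (Fin n → R) →ₗ[R] X), ψ ∘ₗ φ = c • LinearMap.id

variable {R X}

/- The scaled inverse is the inverse of `dualTensorHom` for the free module `Fin n → R`,
conjugated by `φ` and `ψ`, as in `dualTensorHom_bijective`. -/
theorem SmulIdFactorsThroughFree.hasScaledInverse_dualTensorHom {c : R}
    (h : SmulIdFactorsThroughFree R X c) (Y : Type*) [AddCommGroup Y] [Module R Y] :
    HasScaledInverse (dualTensorHom R X Y) c := by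
  obtain ⟨n, φ, ψ, hψφ⟩ := h
  let e := dualTensorHomEquiv R (Fin n → R) Y
  have he : e.toLinearMap = dualTensorHom R (Fin n → R) Y := rfl
  refine ⟨φ.dualMap.rTensor Y ∘ₗ e.symm.toLinearMap ∘ₗ ψ.lcomp R Y, ?_, ?_⟩
  · have hdual : φ.dualMap ∘ₗ ψ.dualMap = c • LinearMap.id := by
      rw [dualMap_comp_dualMap, hψφ]
      ext f x
      simp
    rw [comp_assoc, comp_assoc, ← dualTensorHom_comp_rTensor_dualMap, ← he,
      ← comp_assoc _ e.toLinearMap, LinearEquiv.symm_comp, id_comp, ← rTensor_comp, hdual,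
      rTensor_smul, rTensor_id]
  · rw [← comp_assoc, dualTensorHom_comp_rTensor_dualMap, comp_assoc, ← he,
      ← comp_assoc _ e.symm.toLinearMap, LinearEquiv.comp_symm, id_comp]
    ext g x
    change g (ψ (φ x)) = c • g x
    rw [← comp_apply ψ φ, hψφ, LinearMap.smul_apply, id_apply, map_smul]

theorem exists_mem_smulIdFactorsThroughFree (S : Submonoid R) [Module.FinitePresentation R X]
    [Module.Projective (Localization S) (LocalizedModule S X)] :
    ∃ c ∈ S, SmulIdFactorsThroughFree R X c := by
  let f := LocalizedModule.mkLinearMap S X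
  obtain ⟨n, π, σ, -, -, hπσ⟩ :=
    Module.Finite.exists_comp_eq_id_of_projective (Localization S) (LocalizedModule S X)
  let ι : (Fin n → R) →ₗ[R] Fin n → Localization S :=
    .pi fun i => Algebra.linearMap R (Localization S) ∘ₗ .proj i
  -- Lift the splitting `π ∘ σ = id` of the localization back to `X`, up to elements of `S`.
  obtain ⟨φ, s, hφ⟩ :=
    Module.FinitePresentation.exists_lift_of_isLocalizedModule S ι (σ.restrictScalars R ∘ₗ f)
  obtain ⟨ψ, t, hψ⟩ :=
    Module.FinitePresentation.exists_lift_of_isLocalizedModule S f (π.restrictScalars R ∘ₗ ι)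
  have hfψφ : f ∘ₗ (ψ ∘ₗ φ) = f ∘ₗ ((t * s : R) • LinearMap.id) := by
    ext x
    have hπσx : π (σ (f x)) = f x := congr($hπσ (f x))
    have hφx : ι (φ x) = s • σ (f x) := congr($hφ x)
    change f (ψ (φ x)) = f ((t * s : R) • x)
    rw [← comp_apply f ψ, hψ, LinearMap.smul_apply, comp_apply, hφx, coe_restrictScalars,
      Submonoid.smul_def, Submonoid.smul_def, map_smul_of_tower, hπσx, smul_smul, map_smul]
  obtain ⟨u, hu⟩ := Module.Finite.exists_smul_of_comp_eq_of_isLocalizedModule S f _ _ hfψφ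
  refine ⟨u * (t * s), S.mul_mem u.2 (S.mul_mem t.2 s.2), n, φ, (u : R) • ψ, ?_⟩
  rw [smul_comp, ← Submonoid.smul_def, hu, Submonoid.smul_def, smul_smul]

end FactorsThroughFree

/- `b / a` stabilises the finitely generated faithful module `I`, hence is integral over `A`. -/
theorem IsIntegrallyClosed.dvd_of_forall_mem_exists_mem {A : Type*} [CommRing A] [IsDomain A]
    [IsIntegrallyClosed A] {I : Ideal A} (hI : I.FG) (hI0 : I ≠ ⊥) {a b : A} (ha : a ≠ 0)
    (h : ∀ m ∈ I, ∃ k ∈ I, m * b = a * k) : a ∣ b := by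
  let K := FractionRing A
  have ha' : algebraMap A K a ≠ 0 := IsFractionRing.to_map_ne_zero_of_mem_nonZeroDivisors
    (mem_nonZeroDivisors_of_ne_zero ha)
  let x : K := algebraMap A K b / algebraMap A K a
  have hx : IsIntegral A x := by
    refine isIntegral_of_smul_mem_submodule (R := A) (A := K) (M := K)
      (Submodule.map (Algebra.linearMap A K) I) ?_ (Submodule.FG.map _ hI) x ?_
    · obtain ⟨m, hm, hm0⟩ := (Submodule.ne_bot_iff _).mp hI0
      exact (Submodule.ne_bot_iff _).mpr
        ⟨_, ⟨m, hm, rfl⟩, IsFractionRing.to_map_eq_zero_iff.not.mpr hm0⟩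
    · rintro _ ⟨m, hm, rfl⟩
      obtain ⟨k, hk, hmk⟩ := h m hm
      refine ⟨k, hk, ?_⟩
      simp only [Algebra.linearMap_apply, smul_eq_mul, x]
      rw [div_mul_eq_mul_div, eq_div_iff ha', ← map_mul, ← map_mul, mul_comm b, hmk, mul_comm]
  obtain ⟨y, hy⟩ := IsIntegrallyClosed.algebraMap_eq_of_integral hx
  refine ⟨y, IsFractionRing.injective A K ?_⟩
  rw [map_mul, hy, mul_div_cancel₀ _ ha']

section LocalRing

open IsLocalRing

variable {A : Type*} [CommRing A] [IsDomain A] [IsLocalRing A] [IsNoetherianRing A]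
  [IsIntegrallyClosed A]

theorem IsLocalRing.maximalIdeal_isPrincipal_of_forall_mem_iff {a b : A} (ha : a ≠ 0)
    (h : ∀ m, m ∈ maximalIdeal A ↔ a ∣ m * b) : (maximalIdeal A).IsPrincipal := by
  have ha_mem : a ∈ maximalIdeal A := (h a).mpr (dvd_mul_right a b)
  obtain ⟨m, hm, k, hk, hmk⟩ : ∃ m ∈ maximalIdeal A, ∃ k ∉ maximalIdeal A, m * b = a * k := by
    by_contra! hstab
    have hdvd : a ∣ b := IsIntegrallyClosed.dvd_of_forall_mem_exists_mem
      (IsNoetherian.noetherian _) ((Submodule.ne_bot_iff _).mpr ⟨a, ha_mem, ha⟩) ha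
      fun m hm => by
        obtain ⟨k, hk⟩ := (h m).mp hm
        exact ⟨k, not_not.mp fun hk' => hstab m hm k hk' hk, hk⟩
    exact (maximalIdeal.isMaximal A).ne_top
      ((Ideal.eq_top_iff_one _).mpr ((h 1).mpr (by rwa [one_mul])))
  have hku : IsUnit k := by rwa [mem_maximalIdeal, mem_nonunits_iff, not_not] at hk
  refine ⟨m, le_antisymm (fun m' hm' => ?_) ((Ideal.span_singleton_le_iff_mem _).mpr hm)⟩
  obtain ⟨k', hk'⟩ := (h m').mp hm'
  have : k * m' = k' * m := mul_left_cancel₀ ha <| by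
    rw [← mul_assoc, ← hmk, ← mul_assoc, ← hk']; ring
  refine Submodule.mem_span_singleton.mpr ⟨hku.unit⁻¹ * k', ?_⟩
  rw [smul_eq_mul, mul_assoc, ← this, ← mul_assoc, IsUnit.val_inv_mul, one_mul]

theorem IsDiscreteValuationRing.of_isAssociatedPrime_maximalIdeal {a : A} (ha : a ≠ 0)
    (h : IsAssociatedPrime (IsLocalRing.maximalIdeal A) (A ⧸ Ideal.span {a})) :
    IsDiscreteValuationRing A := by
  obtain ⟨-, z, hz⟩ := isAssociatedPrime_iff.mp h
  obtain ⟨b, rfl⟩ := Ideal.Quotient.mk_surjective z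
  have hmem (m : A) : m ∈ IsLocalRing.maximalIdeal A ↔ a ∣ m * b := by
    rw [hz, Submodule.mem_colon_singleton, Submodule.mem_bot, Algebra.smul_def,
      Ideal.Quotient.algebraMap_eq, ← map_mul, Ideal.Quotient.eq_zero_iff_mem,
      Ideal.mem_span_singleton]
  have hnf : ¬IsField A := by
    rw [isField_iff_maximalIdeal_eq]
    exact (Submodule.ne_bot_iff _).mpr ⟨a, (hmem a).mpr (dvd_mul_right a b), ha⟩
  exact ((IsDiscreteValuationRing.TFAE A hnf).out 0 4).mpr
    (IsLocalRing.maximalIdeal_isPrincipal_of_forall_mem_iff ha hmem)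

end LocalRing

theorem IsDiscreteValuationRing.localization_of_isAssociatedPrime {R : Type*} [CommRing R]
    [IsDomain R] [IsNoetherianRing R] [IsIntegrallyClosed R] {c : R} (hc : c ≠ 0) {P : Ideal R}
    [P.IsPrime] (hP : IsAssociatedPrime P (R ⧸ Ideal.span {c})) :
    IsDiscreteValuationRing (Localization.AtPrime P) := by
  let Rₚ := Localization.AtPrime P
  have : IsNoetherianRing Rₚ := IsLocalization.isNoetherianRing P.primeCompl Rₚ ‹_›
  have : IsIntegrallyClosed Rₚ :=
    isIntegrallyClosed_of_isLocalization Rₚ P.primeCompl P.primeCompl_le_nonZeroDivisors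
  refine of_isAssociatedPrime_maximalIdeal (a := algebraMap R Rₚ c)
    (IsLocalization.to_map_ne_zero_of_mem_nonZeroDivisors Rₚ P.primeCompl_le_nonZeroDivisors
      (mem_nonZeroDivisors_of_ne_zero hc)) ?_
  have hPₚ :=
    associatedPrimes.mem_associatedPrimes_of_comap_mem_associatedPrimes_of_isLocalizedModule
    P.primeCompl ((Ideal.span {c}).toLocalizedQuotient' Rₚ P.primeCompl (Algebra.linearMap R Rₚ))
    (IsLocalRing.maximalIdeal Rₚ)
    (by rw [← Ideal.under_def, Localization.AtPrime.under_maximalIdeal]; exact hP)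
  rwa [Ideal.span, Submodule.localized'_span, Set.image_singleton] at hPₚ

section NormalDomain

variable {R : Type*} [CommRing R] [IsDomain R] [IsNoetherianRing R]
  {X : Type*} [AddCommGroup X] [Module R X] [Module.Finite R X]

theorem exists_smulIdFactorsThroughFree_ne_zero : ∃ c ≠ 0, SmulIdFactorsThroughFree R X c := by
  have : Module.FinitePresentation R X := Module.finitePresentation_of_finite R X
  obtain ⟨c, hc, hcX⟩ := exists_mem_smulIdFactorsThroughFree (X := X) (nonZeroDivisors R)
  exact ⟨c, nonZeroDivisors.ne_zero hc, hcX⟩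

theorem exists_smulIdFactorsThroughFree_notMem [IsIntegrallyClosed R] [IsTorsionFree R X]
    {c : R} (hc : c ≠ 0) {P : Ideal R} (hP : IsAssociatedPrime P (R ⧸ Ideal.span {c})) :
    ∃ b ∉ P, SmulIdFactorsThroughFree R X b := by
  have := hP.isPrime
  have := IsDiscreteValuationRing.localization_of_isAssociatedPrime hc hP
  have : Module.FinitePresentation R X := Module.finitePresentation_of_finite R X
  exact exists_mem_smulIdFactorsThroughFree P.primeCompl

theorem bijective_lcomp_dualTensorHom [IsIntegrallyClosed R] [IsTorsionFree R X]
    (Y W : Type*) [AddCommGroup Y] [Module R Y] [AddCommGroup W] [Module R W]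
    [IsReflexive R W] :
    Function.Bijective (lcomp R W (dualTensorHom R X Y)) := by
  obtain ⟨c, hc, hcX⟩ := exists_smulIdFactorsThroughFree_ne_zero (R := R) (X := X)
  refine bijective_lcomp_of_hasScaledInverse (.of_ne_zero hc)
    (hcX.hasScaledInverse_dualTensorHom Y) fun P hP => ?_
  obtain ⟨b, hbP, hbX⟩ := exists_smulIdFactorsThroughFree_notMem (X := X) hc hP
  exact ⟨b, hbP, hbX.hasScaledInverse_dualTensorHom Y⟩

end NormalDomain

theorem nakayama_functor_adjunction_general (R : Type*) [CommRing R] [IsDomain R]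
    [IsNoetherianRing R] [IsIntegrallyClosed R]
    (ω : Type*) [AddCommGroup ω] [Module R ω] [Module.IsReflexive R ω]
    (X Y : Type*) [AddCommGroup X] [Module R X] [Module.Finite R X] [Module.IsReflexive R X]
    [AddCommGroup Y] [Module R Y] :
    Nonempty ((Y →ₗ[R] ((X →ₗ[R] R) →ₗ[R] ω)) ≃ₗ[R] ((X →ₗ[R] Y) →ₗ[R] ω)) :=
  ⟨LinearMap.lflip ≪≫ₗ TensorProduct.lift.equiv (RingHom.id R) _ _ _ ≪≫ₗ
    (LinearEquiv.ofBijective _ (bijective_lcomp_dualTensorHom Y ω)).symm⟩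

theorem nakayama_functor_adjunction (R : Type*) [CommRing R] [IsDomain R]
    [IsNoetherianRing R] [IsIntegrallyClosed R] (hCM : IsCohenMacaulayRing R)
    (ω : Type*) [AddCommGroup ω] [Module R ω] [Module.Finite R ω] [Module.IsReflexive R ω]
    (hω : Module.finrank (FractionRing R) (FractionRing R ⊗[R] ω) = 1)
    (X Y : Type*) [AddCommGroup X] [Module R X] [Module.Finite R X] [Module.IsReflexive R X]
    [AddCommGroup Y] [Module R Y] [Module.Finite R Y] [Module.IsReflexive R Y] :
    Nonempty ((Y →ₗ[R] ((X →ₗ[R] R) →ₗ[R] ω)) ≃ₗ[R] ((X →ₗ[R] Y) →ₗ[R] ω)) :=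
  nakayama_functor_adjunction_general R ω X Y
end
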